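/- arXiv:1510.05283 — 4 statements merged into one kernel-verified Lean document; each statement's English description precedes it below -/
import Mathlib

section
/- The sets A_{I,J} over (I,J) ∈ O are mutually disjoint (i.e., A_{I,J} ∩ A_{I',J'} = ∅ for any two distinct pairs (I,J), (I',J') ∈ O), and A is exactly the union of the sets A_{I,J} over all (I,J) ∈ O. -/
open Finset

/-- The maximum of `|z i - z j|` over `j ∈ S`, with the convention `max ∅ = 0`. -/
noncomputable def maxDist {n : ℕ} (z : Fin n → ℝ) (i : Fin n) (S : Finset (Fin n)) : ℝ :=
  if h : S.Nonempty then S.sup' h (fun j => |z i - z j|) else 0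

/-- `ν^z_{I,i}`: the minimum over all subsets `S ⊆ I \ {i}` with `|S| = ⌊n/3⌋` of
`max_{j ∈ S} |z i - z j|`, with the convention `min ∅ = 0`. -/
noncomputable def nu (n : ℕ) (z : Fin n → ℝ) (I : Finset (Fin n)) (i : Fin n) : ℝ :=
  if h : ((I.erase i).powersetCard (n / 3)).Nonempty then
    ((I.erase i).powersetCard (n / 3)).inf' h (maxDist z i)
  else 0

/-- `ν^z_I = max_{i ∈ I} ν^z_{I,i}`, with the convention `max ∅ = 0`. -/
noncomputable def nuMax (n : ℕ) (z : Fin n → ℝ) (I : Finset (Fin n)) : ℝ :=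
  if h : I.Nonempty then I.sup' h (nu n z I) else 0

/-- `δ^z = (max{t₁,…,tₙ} - min{t₁,…,tₙ}) / n`. -/
noncomputable def delta (n : ℕ) (z : Fin n → ℝ) : ℝ :=
  if h : (Finset.univ : Finset (Fin n)).Nonempty then
    (Finset.univ.sup' h z - Finset.univ.inf' h z) / n
  else 0

/-- `ẏ = (t₁, …, t_{n-1}, 0) ∈ ℝⁿ` for `y = (t₁, …, t_{n-1}) ∈ ℝ^{n-1}`. -/
def ydot (n : ℕ) (y : Fin (n - 1) → ℝ) : Fin n → ℝ :=
  fun i => if h : (i : ℕ) < n - 1 then y ⟨i, h⟩ else 0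

/-- The open cube `(-1, 1)^m`, the interior of `D^m = [-1,1]^m`. -/
def IntD (m : ℕ) : Set (Fin m → ℝ) := {y | ∀ i, y i ∈ Set.Ioo (-1 : ℝ) 1}

/-- `(I, J) ∈ O`: `I` and `J` are disjoint nonempty subsets of `[n]` with `I ∪ J = [n]`,
`|I| > n/3`, and `|J| > n/3`. -/
def memO (n : ℕ) (I J : Finset (Fin n)) : Prop :=
  I.Nonempty ∧ J.Nonempty ∧ Disjoint I J ∧ I ∪ J = Finset.univ ∧
    (n : ℝ) < 3 * I.card ∧ (n : ℝ) < 3 * J.card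

/-- The set `A_{I,J}`. -/
def setAIJ (n : ℕ) (I J : Finset (Fin n)) : Set (Fin (n - 1) → ℝ) :=
  {y | y ∈ IntD (n - 1) ∧ ∀ i ∈ I, ∀ j ∈ J,
    delta n (ydot n y) < ydot n y j - ydot n y i ∧
    nu n (ydot n y) I i < delta n (ydot n y) ∧
    nu n (ydot n y) J j < delta n (ydot n y)}

/-- The set `A = { y ∈ Int(D^{n-1}) : ν^{ẏ}_{[n]} < δ^{ẏ} }`. -/
def setA (n : ℕ) : Set (Fin (n - 1) → ℝ) :=
  {y | y ∈ IntD (n - 1) ∧ nuMax n (ydot n y) Finset.univ < delta n (ydot n y)}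

/-- The point `b ∈ ℝ^{n-1}` associated to `(I, J) ∈ O`: if `n ∈ J` then `b_i = -1/2` for
`i ∈ I` and `b_j = 0` for `j ∈ J \ {n}`; if `n ∈ I` then `b_i = 0` for `i ∈ I \ {n}` and
`b_j = 1/2` for `j ∈ J`. -/
noncomputable def bpt (n : ℕ) (I J : Finset (Fin n)) : Fin (n - 1) → ℝ :=
  fun i =>
    if (⟨n - 1, by have := i.isLt; omega⟩ : Fin n) ∈ J then
      (if Fin.castLE (Nat.sub_le n 1) i ∈ I then -(1 / 2 : ℝ) else 0)
    else
      (if Fin.castLE (Nat.sub_le n 1) i ∈ I then 0 else (1 / 2 : ℝ))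

lemma maxDist_nonneg {n : ℕ} (z : Fin n → ℝ) (i : Fin n) (S : Finset (Fin n)) :
    0 ≤ maxDist z i S := by
  unfold maxDist
  split
  · rename_i h
    obtain ⟨j, hj⟩ := h
    exact le_trans (abs_nonneg (z i - z j)) (Finset.le_sup' (fun j => |z i - z j|) hj)
  · exact le_refl 0

lemma maxDist_lt_iff {n : ℕ} (z : Fin n → ℝ) (i : Fin n) (S : Finset (Fin n)) {d : ℝ}
    (hd : 0 < d) : maxDist z i S < d ↔ ∀ j ∈ S, |z i - z j| < d := by
  unfold maxDist
  split
  · rename_i h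
    exact Finset.sup'_lt_iff h
  · rename_i h
    rw [Finset.not_nonempty_iff_eq_empty] at h
    subst h
    simp [hd]

lemma nu_nonneg (n : ℕ) (z : Fin n → ℝ) (I : Finset (Fin n)) (i : Fin n) :
    0 ≤ nu n z I i := by
  unfold nu
  split
  · exact Finset.le_inf' _ _ fun S _ => maxDist_nonneg z i S
  · exact le_refl 0

lemma nu_le {n : ℕ} (z : Fin n → ℝ) {I : Finset (Fin n)} {i : Fin n} {S : Finset (Fin n)}
    (hS : S ∈ (I.erase i).powersetCard (n / 3)) : nu n z I i ≤ maxDist z i S := by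
  unfold nu
  rw [dif_pos ⟨S, hS⟩]
  exact Finset.inf'_le _ hS

lemma nu_lt_of {n : ℕ} (z : Fin n → ℝ) {I : Finset (Fin n)} {i : Fin n} {S : Finset (Fin n)}
    {d : ℝ} (hd : 0 < d) (hS : S ⊆ I.erase i) (hc : S.card = n / 3)
    (h : ∀ j ∈ S, |z i - z j| < d) : nu n z I i < d :=
  lt_of_le_of_lt (nu_le z (Finset.mem_powersetCard.mpr ⟨hS, hc⟩))
    ((maxDist_lt_iff z i S hd).mpr h)

lemma nu_extract {n : ℕ} (z : Fin n → ℝ) {I : Finset (Fin n)} {i : Fin n} {d : ℝ}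
    (hd : 0 < d) (hcard : n / 3 ≤ (I.erase i).card) (hlt : nu n z I i < d) :
    ∃ S, S ⊆ I.erase i ∧ S.card = n / 3 ∧ ∀ j ∈ S, |z i - z j| < d := by
  have hne : ((I.erase i).powersetCard (n / 3)).Nonempty :=
    Finset.powersetCard_nonempty.mpr hcard
  obtain ⟨S, hS, hEq⟩ := Finset.exists_mem_eq_inf' hne (maxDist z i)
  unfold nu at hlt
  rw [dif_pos hne, hEq] at hlt
  obtain ⟨hsub, hc⟩ := Finset.mem_powersetCard.mp hS
  exact ⟨S, hsub, hc, (maxDist_lt_iff z i S hd).mp hlt⟩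

lemma gap_lemma : ∀ (N : ℕ) (V : Finset ℝ) (hV : V.Nonempty), V.card ≤ N → ∀ d : ℝ, 0 < d →
    ((V.card : ℝ) - 1) * d < V.max' hV - V.min' hV →
    ∃ c ∈ V, (∃ x ∈ V, c < x) ∧ ∀ x ∈ V, c < x → c + d < x := by
  intro N
  induction N with
  | zero =>
    intro V hV hcard
    exact absurd (Finset.card_pos.mpr hV) (by omega)
  | succ N ih =>
    intro V hV hcard d hd hgap
    set m := V.min' hV with hm
    have hmV : m ∈ V := V.min'_mem hV
    have hcard1 : 1 ≤ V.card := Finset.card_pos.mpr hV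
    have hcard1' : (1 : ℝ) ≤ V.card := by exact_mod_cast hcard1
    have hsupmem : V.max' hV ∈ V := V.max'_mem hV
    have hsup_gt : m < V.max' hV := by nlinarith
    set W := V.filter (fun x => m < x) with hW
    have hWne : W.Nonempty := ⟨V.max' hV, Finset.mem_filter.mpr ⟨hsupmem, hsup_gt⟩⟩
    set m' := W.min' hWne with hm'
    have hm'W : m' ∈ W := W.min'_mem hWne
    have hm'V : m' ∈ V := (Finset.mem_filter.mp hm'W).1
    have hmm' : m < m' := (Finset.mem_filter.mp hm'W).2
    by_cases hcase : m + d < m'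
    · refine ⟨m, hmV, ⟨m', hm'V, hmm'⟩, ?_⟩
      intro x hx hmx
      have hxW : x ∈ W := Finset.mem_filter.mpr ⟨hx, hmx⟩
      have := W.min'_le x hxW
      linarith
    · push_neg at hcase
      have hWsub : W ⊆ V := Finset.filter_subset _ _
      have hmnotW : m ∉ W := by simp [hW]
      have hWltV : W.card < V.card :=
        Finset.card_lt_card ⟨hWsub, fun h => hmnotW (h hmV)⟩
      have hWcard : W.card ≤ N := by omega
      have hsupW : W.max' hWne = V.max' hV := by
        apply le_antisymm
        · exact Finset.max'_le _ _ _ fun x hx => V.le_max' x (hWsub hx)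
        · exact W.le_max' _ (Finset.mem_filter.mpr ⟨hsupmem, hsup_gt⟩)
      have hWcardV : (W.card : ℝ) + 1 ≤ V.card := by exact_mod_cast hWltV
      have hgap' : ((W.card : ℝ) - 1) * d < W.max' hWne - W.min' hWne := by
        rw [hsupW, ← hm']
        nlinarith
      obtain ⟨c, hcW, ⟨x, hxW, hcx⟩, hc⟩ := ih W hWne hWcard d hd hgap'
      refine ⟨c, hWsub hcW, ⟨x, hWsub hxW, hcx⟩, ?_⟩
      intro u hu hcu
      have hmc : m < c := (Finset.mem_filter.mp hcW).2
      exact hc u (Finset.mem_filter.mpr ⟨hu, lt_trans hmc hcu⟩) hcu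

lemma delta_spec (n : ℕ) (hn : 0 < n) (z : Fin n → ℝ)
    (hne : (Finset.univ : Finset (Fin n)).Nonempty) :
    Finset.univ.sup' hne z - Finset.univ.inf' hne z = n * delta n z := by
  unfold delta
  rw [dif_pos hne]
  have : (n : ℝ) ≠ 0 := by positivity
  field_simp

lemma case3 (n : ℕ) (z : Fin n → ℝ) (I J I' J' : Finset (Fin n)) (d : ℝ) (hd : 0 < d)
    (hIc : (n : ℝ) < 3 * I.card) (hJ'c : (n : ℝ) < 3 * J'.card)
    (hI'c : (n : ℝ) < 3 * I'.card)
    (hIJ : Disjoint I J) (hI'J' : Disjoint I' J') (hIJ' : ∀ k ∈ I, k ∉ J')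
    (hunion : I ∪ J = Finset.univ)
    (H : ∀ i ∈ I, ∀ j ∈ J, d < z j - z i)
    {l : Fin n} (hlJ : l ∈ J) (hlI' : l ∈ I') (hnu : nu n z I' l < d) : False := by
  have hIcard : n / 3 + 1 ≤ I.card := by
    have : n < 3 * I.card := by exact_mod_cast hIc
    omega
  have hJ'card : n / 3 + 1 ≤ J'.card := by
    have : n < 3 * J'.card := by exact_mod_cast hJ'c
    omega
  have hI'card : n / 3 + 1 ≤ I'.card := by
    have : n < 3 * I'.card := by exact_mod_cast hI'c
    omega
  obtain ⟨S, hSsub, hScard, hSc⟩ := nu_extract z hd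
    (by rw [Finset.card_erase_of_mem hlI']; omega) hnu
  have hSJ : ∀ s ∈ S, s ∈ J := by
    intro s hs
    have hsU : s ∈ I ∪ J := hunion ▸ Finset.mem_univ s
    rcases Finset.mem_union.mp hsU with h | h
    · exfalso
      have h1 := H s h l hlJ
      have h2 := (abs_lt.mp (hSc s hs)).2
      linarith
    · exact h
  have hlS : l ∉ S := fun h => (Finset.mem_erase.mp (hSsub h)).1 rfl
  set K := insert l S with hK
  have hKcard : K.card = n / 3 + 1 := by
    rw [hK, Finset.card_insert_of_notMem hlS, hScard]
  have hKJ : K ⊆ J := Finset.insert_subset hlJ hSJ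
  have hKI' : K ⊆ I' :=
    Finset.insert_subset hlI' (hSsub.trans (Finset.erase_subset _ _))
  have d1 : Disjoint I K := hIJ.mono_right hKJ
  have d2 : Disjoint J' K := hI'J'.symm.mono_right hKI'
  have d3 : Disjoint I J' := Finset.disjoint_left.mpr hIJ'
  have hcardsum : (I ∪ J' ∪ K).card = I.card + J'.card + K.card := by
    rw [Finset.card_union_of_disjoint (Finset.disjoint_union_left.mpr ⟨d1, d2⟩),
      Finset.card_union_of_disjoint d3]
  have hle : (I ∪ J' ∪ K).card ≤ n := by
    have := Finset.card_le_univ (I ∪ J' ∪ K)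
    simpa using this
  omega

lemma setAIJ_sub (n : ℕ) (hn : 2 ≤ n) (I J : Finset (Fin n)) (hO : memO n I J) :
    setAIJ n I J ⊆ setA n := by
  obtain ⟨hIne, hJne, hdisj, hunion, hIc, hJc⟩ := hO
  rintro y ⟨hyD, hcond⟩
  set z := ydot n y with hz
  set d := delta n z with hdd
  obtain ⟨i0, hi0⟩ := hIne
  obtain ⟨j0, hj0⟩ := hJne
  have hd0 : 0 < d := lt_of_le_of_lt (nu_nonneg n z I i0) (hcond i0 hi0 j0 hj0).2.1
  have hIcard : n / 3 + 1 ≤ I.card := by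
    have : n < 3 * I.card := by exact_mod_cast hIc
    omega
  have hJcard : n / 3 + 1 ≤ J.card := by
    have : n < 3 * J.card := by exact_mod_cast hJc
    omega
  have hne : (Finset.univ : Finset (Fin n)).Nonempty := ⟨i0, Finset.mem_univ _⟩
  refine ⟨hyD, ?_⟩
  unfold nuMax
  rw [dif_pos hne, Finset.sup'_lt_iff]
  intro k _
  have hk : k ∈ I ∪ J := hunion ▸ Finset.mem_univ k
  rcases Finset.mem_union.mp hk with hkI | hkJ
  · have h1 : nu n z I k < d := (hcond k hkI j0 hj0).2.1
    obtain ⟨S, hSsub, hScard, hSc⟩ := nu_extract z hd0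
      (by rw [Finset.card_erase_of_mem hkI]; omega) h1
    exact nu_lt_of z hd0
      (hSsub.trans (Finset.erase_subset_erase _ (Finset.subset_univ I))) hScard hSc
  · have h1 : nu n z J k < d := (hcond i0 hi0 k hkJ).2.2
    obtain ⟨S, hSsub, hScard, hSc⟩ := nu_extract z hd0
      (by rw [Finset.card_erase_of_mem hkJ]; omega) h1
    exact nu_lt_of z hd0
      (hSsub.trans (Finset.erase_subset_erase _ (Finset.subset_univ J))) hScard hSc

lemma setA_sub (n : ℕ) (hn : 2 ≤ n) (y : Fin (n - 1) → ℝ) (hy : y ∈ setA n) :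
    ∃ I J, memO n I J ∧ y ∈ setAIJ n I J := by
  obtain ⟨hyD, hnuMax⟩ := hy
  set z := ydot n y with hz
  have hne : (Finset.univ : Finset (Fin n)).Nonempty := ⟨⟨0, by omega⟩, Finset.mem_univ _⟩
  set d := delta n z with hdd
  have hk : ∀ k, nu n z Finset.univ k < d := by
    unfold nuMax at hnuMax
    rw [dif_pos hne] at hnuMax
    intro k
    exact lt_of_le_of_lt (Finset.le_sup' _ (Finset.mem_univ k)) hnuMax
  have hd0 : 0 < d := lt_of_le_of_lt (nu_nonneg n z Finset.univ ⟨0, by omega⟩) (hk _)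
  set V := Finset.univ.image z with hV
  have hVne : V.Nonempty := hne.image z
  have hmax : V.max' hVne = Finset.univ.sup' hne z := by
    apply le_antisymm
    · apply Finset.max'_le
      intro x hx
      obtain ⟨k, _, rfl⟩ := Finset.mem_image.mp hx
      exact Finset.le_sup' z (Finset.mem_univ k)
    · apply Finset.sup'_le
      intro k _
      exact V.le_max' (z k) (Finset.mem_image_of_mem z (Finset.mem_univ k))
  have hmin : V.min' hVne = Finset.univ.inf' hne z := by
    apply le_antisymm
    · apply Finset.le_inf'
      intro k _
      exact V.min'_le (z k) (Finset.mem_image_of_mem z (Finset.mem_univ k))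
    · apply Finset.le_min'
      intro x hx
      obtain ⟨k, _, rfl⟩ := Finset.mem_image.mp hx
      exact Finset.inf'_le z (Finset.mem_univ k)
  have hVcard : V.card ≤ n := le_trans Finset.card_image_le (by simp)
  have hsum : Finset.univ.sup' hne z - Finset.univ.inf' hne z = n * d :=
    delta_spec n (by omega) z hne
  have hVcard' : (V.card : ℝ) ≤ n := by exact_mod_cast hVcard
  obtain ⟨c, hcV, ⟨x0, hx0V, hcx0⟩, hgap⟩ := gap_lemma n V hVne hVcard d hd0 (by
    rw [hmax, hmin, hsum]; nlinarith)
  set I := Finset.univ.filter (fun k => z k ≤ c) with hI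
  set J := Finset.univ.filter (fun k => c < z k) with hJ
  obtain ⟨kc, _, hkc⟩ := Finset.mem_image.mp hcV
  obtain ⟨k0, _, hk0⟩ := Finset.mem_image.mp hx0V
  have hIne : I.Nonempty := ⟨kc, Finset.mem_filter.mpr ⟨Finset.mem_univ _, le_of_eq hkc⟩⟩
  have hJne : J.Nonempty := ⟨k0, Finset.mem_filter.mpr ⟨Finset.mem_univ _, hk0 ▸ hcx0⟩⟩
  have hdisj : Disjoint I J := by
    rw [Finset.disjoint_left]
    intro a haI haJ
    exact absurd (Finset.mem_filter.mp haI).2 (not_le.mpr (Finset.mem_filter.mp haJ).2)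
  have hunion : I ∪ J = Finset.univ := by
    ext a
    simp only [hI, hJ, Finset.mem_union, Finset.mem_filter, Finset.mem_univ, true_and,
      iff_true]
    exact le_or_gt (z a) c
  have hsep : ∀ i ∈ I, ∀ j ∈ J, d < z j - z i := by
    intro i hi j hj
    have h1 : z i ≤ c := (Finset.mem_filter.mp hi).2
    have h2 : c < z j := (Finset.mem_filter.mp hj).2
    have h3 : c + d < z j := hgap (z j) (Finset.mem_image_of_mem z (Finset.mem_univ j)) h2
    linarith
  have hSk : ∀ k : Fin n, ∃ S, S ⊆ Finset.univ.erase k ∧ S.card = n / 3 ∧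
      ∀ j ∈ S, |z k - z j| < d := by
    intro k
    apply nu_extract z hd0 _ (hk k)
    rw [Finset.card_erase_of_mem (Finset.mem_univ k)]
    simp only [Finset.card_univ, Fintype.card_fin]
    omega
  have hIkey : ∀ k ∈ I, ∃ S, S ⊆ I.erase k ∧ S.card = n / 3 ∧ ∀ j ∈ S, |z k - z j| < d := by
    intro k hkI
    obtain ⟨S, hSsub, hScard, hSclose⟩ := hSk k
    refine ⟨S, ?_, hScard, hSclose⟩
    intro s hs
    have hsk : s ≠ k := (Finset.mem_erase.mp (hSsub hs)).1
    refine Finset.mem_erase.mpr ⟨hsk, Finset.mem_filter.mpr ⟨Finset.mem_univ s, ?_⟩⟩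
    by_contra hcs
    push_neg at hcs
    have hgs := hgap (z s) (Finset.mem_image_of_mem z (Finset.mem_univ s)) hcs
    have hzk : z k ≤ c := (Finset.mem_filter.mp hkI).2
    have habs := (abs_lt.mp (hSclose s hs)).1
    linarith
  have hJkey : ∀ k ∈ J, ∃ S, S ⊆ J.erase k ∧ S.card = n / 3 ∧ ∀ j ∈ S, |z k - z j| < d := by
    intro k hkJ
    obtain ⟨S, hSsub, hScard, hSclose⟩ := hSk k
    refine ⟨S, ?_, hScard, hSclose⟩
    intro s hs
    have hsk : s ≠ k := (Finset.mem_erase.mp (hSsub hs)).1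
    refine Finset.mem_erase.mpr ⟨hsk, Finset.mem_filter.mpr ⟨Finset.mem_univ s, ?_⟩⟩
    by_contra hcs
    push_neg at hcs
    have hgk := hgap (z k) (Finset.mem_image_of_mem z (Finset.mem_univ k))
      (Finset.mem_filter.mp hkJ).2
    have habs := (abs_lt.mp (hSclose s hs)).2
    linarith
  have hIcard : n / 3 + 1 ≤ I.card := by
    obtain ⟨ki, hki⟩ := hIne
    obtain ⟨S, hSsub, hScard, _⟩ := hIkey ki hki
    have h1 : S.card ≤ (I.erase ki).card := Finset.card_le_card hSsub
    rw [Finset.card_erase_of_mem hki] at h1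
    have h2 : 1 ≤ I.card := Finset.card_pos.mpr ⟨ki, hki⟩
    omega
  have hJcard : n / 3 + 1 ≤ J.card := by
    obtain ⟨kj, hkj⟩ := hJne
    obtain ⟨S, hSsub, hScard, _⟩ := hJkey kj hkj
    have h1 : S.card ≤ (J.erase kj).card := Finset.card_le_card hSsub
    rw [Finset.card_erase_of_mem hkj] at h1
    have h2 : 1 ≤ J.card := Finset.card_pos.mpr ⟨kj, hkj⟩
    omega
  refine ⟨I, J, ⟨hIne, hJne, hdisj, hunion, ?_, ?_⟩, hyD, ?_⟩
  · have : n < 3 * I.card := by omega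
    exact_mod_cast this
  · have : n < 3 * J.card := by omega
    exact_mod_cast this
  · intro i hi j hj
    refine ⟨hsep i hi j hj, ?_, ?_⟩
    · obtain ⟨S, hSsub, hScard, hSc⟩ := hIkey i hi
      exact nu_lt_of z hd0 hSsub hScard hSc
    · obtain ⟨S, hSsub, hScard, hSc⟩ := hJkey j hj
      exact nu_lt_of z hd0 hSsub hScard hSc

/-- The sets `A_{I,J}` over `(I,J) ∈ O` are mutually disjoint, and `A` is exactly the union
of the sets `A_{I,J}` over all `(I,J) ∈ O`. -/
theorem stmt_0 (n : ℕ) (hn : 2 ≤ n) :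
    (∀ I J I' J' : Finset (Fin n), memO n I J → memO n I' J' → (I, J) ≠ (I', J') →
      setAIJ n I J ∩ setAIJ n I' J' = ∅) ∧
    setA n = ⋃ (I : Finset (Fin n)) (J : Finset (Fin n)) (_ : memO n I J), setAIJ n I J := by
  constructor
  · intro I J I' J' hO hO' hneq
    rw [Set.eq_empty_iff_forall_notMem]
    rintro y ⟨⟨hyD, h1⟩, ⟨_, h2⟩⟩
    set z := ydot n y with hz
    set d := delta n z with hdd
    obtain ⟨hIne, hJne, hIJ, hIJu, hIc, hJc⟩ := hO
    obtain ⟨hI'ne, hJ'ne, hI'J', hI'J'u, hI'c, hJ'c⟩ := hO'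
    obtain ⟨i0, hi0⟩ := hIne
    obtain ⟨j0, hj0⟩ := hJne
    obtain ⟨i0', hi0'⟩ := hI'ne
    obtain ⟨j0', hj0'⟩ := hJ'ne
    have hd0 : 0 < d := lt_of_le_of_lt (nu_nonneg n z I i0) (h1 i0 hi0 j0 hj0).2.1
    by_cases hA : ∃ k, k ∈ I ∧ k ∈ J'
    · obtain ⟨k, hkI, hkJ'⟩ := hA
      by_cases hB : ∃ l, l ∈ J ∧ l ∈ I'
      · obtain ⟨l, hlJ, hlI'⟩ := hB
        have e1 := (h1 k hkI l hlJ).1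
        have e2 := (h2 l hlI' k hkJ').1
        linarith
      · push_neg at hB
        exact case3 n z I' J' I J d hd0 hI'c hJc hIc hI'J' hIJ
          (fun a ha haJ => hB a haJ ha) hI'J'u
          (fun i hi j hj => (h2 i hi j hj).1) hkJ' hkI
          ((h1 k hkI j0 hj0).2.1)
    · push_neg at hA
      by_cases hB : ∃ l, l ∈ J ∧ l ∈ I'
      · obtain ⟨l, hlJ, hlI'⟩ := hB
        exact case3 n z I J I' J' d hd0 hIc hJ'c hI'c hIJ hI'J' hA hIJu
          (fun i hi j hj => (h1 i hi j hj).1) hlJ hlI'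
          ((h2 l hlI' j0' hj0').2.1)
      · push_neg at hB
        apply hneq
        have hII' : I = I' := by
          ext a
          constructor
          · intro ha
            have : a ∈ I' ∪ J' := hI'J'u ▸ Finset.mem_univ a
            rcases Finset.mem_union.mp this with h | h
            · exact h
            · exact absurd h (hA a ha)
          · intro ha
            have : a ∈ I ∪ J := hIJu ▸ Finset.mem_univ a
            rcases Finset.mem_union.mp this with h | h
            · exact h
            · exact absurd ha (hB a h)
        have hJJ' : J = J' := by
          ext a
          constructor
          · intro ha
            have : a ∈ I' ∪ J' := hI'J'u ▸ Finset.mem_univ a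
            rcases Finset.mem_union.mp this with h | h
            · exact absurd ha (Finset.disjoint_left.mp hIJ (hII' ▸ h))
            · exact h
          · intro ha
            have : a ∈ I ∪ J := hIJu ▸ Finset.mem_univ a
            rcases Finset.mem_union.mp this with h | h
            · exact absurd ha (Finset.disjoint_left.mp hI'J' (hII' ▸ h))
            · exact h
        rw [hII', hJJ']
  · ext y
    simp only [Set.mem_iUnion]
    constructor
    · intro hy
      obtain ⟨I, J, hO, hmem⟩ := setA_sub n hn y hy
      exact ⟨I, J, hO, hmem⟩
    · rintro ⟨I, J, hO, hmem⟩
      exact setAIJ_sub n hn I J hO hmem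
end

section
/- For each (I,J) ∈ O, the point b belongs to A_{I,J}; in particular A_{I,J} is nonempty. -/
open Finset

/-!
Since `J` is the complement of `I`, the point `ẏ` for `y = b` is two-valued: it equals some
constant `c` on `I` and `c + 1/2` on `J`. Hence `δ = 1/(2n) < 1/2`, which is the gap between the
two blocks, while `ν_{I,i} = ν_{J,j} = 0` because every distance inside a block vanishes.
-/

lemma maxDist_eq_zero {n : ℕ} {z : Fin n → ℝ} {i : Fin n} {S : Finset (Fin n)}
    (h : ∀ j ∈ S, z j = z i) : maxDist z i S = 0 := by
  unfold maxDist
  split_ifs with hS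
  · exact sup'_eq_of_forall hS _ fun j hj => by simp [h j hj]
  · rfl

lemma nu_eq_zero {n : ℕ} {z : Fin n → ℝ} {I : Finset (Fin n)} {i : Fin n}
    (h : ∀ j ∈ I, z j = z i) : nu n z I i = 0 := by
  unfold nu
  split_ifs with hne
  · refine inf'_eq_of_forall hne _ fun S hS => maxDist_eq_zero fun j hj => h j ?_
    exact mem_of_mem_erase ((mem_powersetCard.mp hS).1 hj)
  · rfl

lemma delta_ite_mem {n : ℕ} {I : Finset (Fin n)} (hI : I.Nonempty) (hIc : Iᶜ.Nonempty)
    {c d : ℝ} (hd : 0 ≤ d) : delta n (fun k => if k ∈ I then c else c + d) = d / n := by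
  obtain ⟨i, hi⟩ := hI
  obtain ⟨j, hj⟩ := hIc
  have hne : (univ : Finset (Fin n)).Nonempty := univ_nonempty_iff.mpr ⟨i⟩
  have hsup : univ.sup' hne (fun k => if k ∈ I then c else c + d) = c + d :=
    le_antisymm (sup'_le _ _ fun k _ => by split_ifs <;> linarith)
      (le_sup'_of_le _ (mem_univ j) (by simp [mem_compl.mp hj]))
  have hinf : univ.inf' hne (fun k => if k ∈ I then c else c + d) = c :=
    le_antisymm (inf'_le_of_le _ (mem_univ i) (by simp [hi]))
      (le_inf' _ _ fun k _ => by split_ifs <;> linarith)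
  rw [delta, dif_pos hne, hsup, hinf, add_sub_cancel_left]

lemma bpt_mem_IntD (n : ℕ) (I J : Finset (Fin n)) : bpt n I J ∈ IntD (n - 1) := by
  intro k
  simp only [bpt]
  split_ifs <;> constructor <;> norm_num

lemma exists_ydot_bpt_compl_eq_ite (n : ℕ) (I : Finset (Fin n)) :
    ∃ c : ℝ, ydot n (bpt n I Iᶜ) = fun k => if k ∈ I then c else c + 1 / 2 := by
  cases n with
  | zero => exact ⟨0, funext fun k => k.elim0⟩
  | succ m =>
    refine ⟨if Fin.last m ∈ I then 0 else -(1 / 2), funext fun k => ?_⟩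
    have hlast : (⟨m + 1 - 1, by omega⟩ : Fin (m + 1)) = Fin.last m := Fin.ext (by simp)
    simp only [ydot]
    by_cases hk : (k : ℕ) < m + 1 - 1
    · rw [dif_pos hk]
      simp only [bpt, hlast, mem_compl, Fin.castLE_mk, Fin.eta]
      by_cases hl : Fin.last m ∈ I <;> by_cases hkI : k ∈ I <;> simp [hl, hkI]
    · obtain rfl : k = Fin.last m := Fin.ext (by simp at hk ⊢; omega)
      rw [dif_neg hk]
      split_ifs <;> norm_num

lemma mem_setAIJ_compl_of_ydot_eq_ite {n : ℕ} (hn : 1 < n) {I : Finset (Fin n)}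
    (hI : I.Nonempty) (hIc : Iᶜ.Nonempty) {y : Fin (n - 1) → ℝ} (hy : y ∈ IntD (n - 1))
    {c d : ℝ} (hd : 0 < d) (h : ydot n y = fun k => if k ∈ I then c else c + d) :
    y ∈ setAIJ n I Iᶜ := by
  refine ⟨hy, fun i hi j hj => ?_⟩
  rw [mem_compl] at hj
  have hδ_pos : 0 < d / n := by positivity
  have hδ_lt : d / n < d := div_lt_self hd (by exact_mod_cast hn)
  rw [h, delta_ite_mem hI hIc hd.le]
  refine ⟨by simp [hi, hj]; linarith, ?_, ?_⟩
  · rwa [nu_eq_zero fun k hk => by simp [hk, hi]]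
  · rwa [nu_eq_zero fun k hk => by simp [mem_compl.mp hk, hj]]

/-- For each `(I,J) ∈ O`, the point `b` belongs to `A_{I,J}`; in particular `A_{I,J}` is
nonempty. -/
theorem stmt_3 (n : ℕ) (hn : 2 ≤ n) (I J : Finset (Fin n)) (hIJ : memO n I J) :
    bpt n I J ∈ setAIJ n I J ∧ (setAIJ n I J).Nonempty := by
  obtain ⟨hI, hJ, hdisj, hunion, -, -⟩ := hIJ
  obtain rfl : J = Iᶜ := (IsCompl.compl_eq ⟨hdisj, codisjoint_iff.mpr hunion⟩).symm
  obtain ⟨c, hc⟩ := exists_ydot_bpt_compl_eq_ite n I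
  have hb : bpt n I Iᶜ ∈ setAIJ n I Iᶜ :=
    mem_setAIJ_compl_of_ydot_eq_ite (by omega) hI hJ (bpt_mem_IntD n I Iᶜ) one_half_pos hc
  exact ⟨hb, _, hb⟩
end

section
/- For each (I,J) ∈ O, the subspace A_{I,J} of ℝ^{n−1} is homeomorphic to ℝ^{n−1} (equivalently, to the open cube Int(D^{n−1}) = (−1,1)^{n−1}). -/
open Finset

/-!
In the coordinates `ẏ`, `A_{I,J}` is the open unit ball of the sup norm intersected with an open
cone `C`, and radial rescaling identifies it with `C`. Adding a multiple of `b = bpt n I J` shifts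
all coordinates in `I` by one amount and all coordinates in `J` by `1/2` more; this leaves every
`ν` unchanged and raises `δ` by only `1/(2n)` of the shift. Hence every line `y + ℝ b` meets `C`
in an open half-line `(σ y, ∞)` with `σ` continuous, and sliding along these lines by
`s ↦ -log (-s)` in the coordinate `σ` maps `C` onto `ℝ^{n-1}`.
-/

section Translation

open Set Filter Topology

variable {E : Type*} [AddCommGroup E] [Module ℝ E] [TopologicalSpace E]

theorem nonempty_homeomorph_of_map_add_smul [ContinuousAdd E] [ContinuousSMul ℝ E] {σ : E → ℝ}
    (hσ : Continuous σ) {b : E} (hσb : ∀ y (t : ℝ), σ (y + t • b) = σ y - t) :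
    Nonempty ({y | σ y < 0} ≃ₜ E) := by
  have hcancel : ∀ (y : E) (s t : ℝ), s + t = 0 → y + s • b + t • b = y := fun y s t h => by
    rw [add_assoc, ← add_smul, h, zero_smul, add_zero]
  have hmem : ∀ z, z + (σ z + Real.exp (-σ z)) • b ∈ {y | σ y < 0} := fun z => by
    simp only [mem_ofPred_eq, hσb]
    linarith [Real.exp_pos (-σ z)]
  have hlog : Continuous fun p : {y | σ y < 0} => Real.log (-σ p) :=
    (hσ.comp continuous_subtype_val).neg.log fun p => (neg_pos.2 p.2).ne'
  -- On each line `y + ℝ b`, in the coordinate `σ`, this is `s ↦ -log (-s)` from `(-∞, 0)` onto `ℝ`.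
  refine ⟨{
    toFun := fun p => p + (σ p + Real.log (-σ p)) • b
    invFun := fun z => ⟨z + (σ z + Real.exp (-σ z)) • b, hmem z⟩
    left_inv := fun p => Subtype.ext ?_
    right_inv := fun z => ?_
    continuous_toFun := by fun_prop
    continuous_invFun := Continuous.subtype_mk (by fun_prop) hmem }⟩
  · refine hcancel _ _ _ ?_
    simp only [hσb, sub_add_cancel_left, neg_neg, Real.exp_log (neg_pos.2 p.2)]
    ring
  · refine hcancel _ _ _ ?_
    simp only [hσb, sub_add_cancel_left, neg_neg, Real.log_exp]
    ring

variable {C : Set E} {b : E}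

noncomputable def entryTime (C : Set E) (b y : E) : ℝ :=
  sInf {s : ℝ | y + s • b ∈ C}

theorem add_smul_mem_of_entryTime_lt (hmono : ∀ y ∈ closure C, ∀ t : ℝ, 0 < t → y + t • b ∈ C)
    (hne : ∀ y, ∃ s : ℝ, y + s • b ∈ C) {y : E} {s : ℝ} (h : entryTime C b y < s) :
    y + s • b ∈ C := by
  obtain ⟨s₀, hs₀, hlt⟩ := exists_lt_of_csInf_lt (hne y) h
  have := hmono _ (subset_closure hs₀) (s - s₀) (sub_pos.2 hlt)
  rwa [add_assoc, ← add_smul, add_sub_cancel] at this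

variable [ContinuousAdd E] [ContinuousSMul ℝ E]

theorem exists_add_smul_mem_of_smul_mem (hC : IsOpen C) (hb : b ∈ C)
    (hcone : ∀ c : ℝ, 0 < c → ∀ y ∈ C, c • y ∈ C) (y : E) : ∃ s : ℝ, y + s • b ∈ C := by
  have hopen : IsOpen {t : ℝ | b + t • y ∈ C} := hC.preimage (by fun_prop)
  obtain ⟨t, ht, htpos⟩ := Filter.nonempty_of_mem (f := 𝓝[>] (0 : ℝ)) <| inter_mem
    (mem_nhdsWithin_of_mem_nhds (hopen.mem_nhds (by simpa using hb))) self_mem_nhdsWithin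
  refine ⟨t⁻¹, ?_⟩
  have := hcone t⁻¹ (inv_pos.2 htpos) _ ht
  rwa [smul_add, smul_smul, inv_mul_cancel₀ (ne_of_gt htpos), one_smul, add_comm] at this

theorem entryTime_lt_of_add_smul_mem (hC : IsOpen C)
    (hbdd : ∀ y, BddBelow {s : ℝ | y + s • b ∈ C}) {y : E} {s : ℝ} (h : y + s • b ∈ C) :
    entryTime C b y < s := by
  have hopen : IsOpen {t : ℝ | y + t • b ∈ C} := hC.preimage (by fun_prop)
  obtain ⟨t, ht, hts⟩ := Filter.nonempty_of_mem (f := 𝓝[<] s) <|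
    inter_mem (mem_nhdsWithin_of_mem_nhds (hopen.mem_nhds h)) self_mem_nhdsWithin
  exact (csInf_le (hbdd y) ht).trans_lt hts

theorem add_smul_mem_iff_entryTime_lt (hC : IsOpen C)
    (hmono : ∀ y ∈ closure C, ∀ t : ℝ, 0 < t → y + t • b ∈ C)
    (hne : ∀ y, ∃ s : ℝ, y + s • b ∈ C) (hbdd : ∀ y, BddBelow {s : ℝ | y + s • b ∈ C})
    {y : E} {s : ℝ} : y + s • b ∈ C ↔ entryTime C b y < s :=
  ⟨entryTime_lt_of_add_smul_mem hC hbdd, add_smul_mem_of_entryTime_lt hmono hne⟩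

theorem entryTime_add_smul (hC : IsOpen C)
    (hmono : ∀ y ∈ closure C, ∀ t : ℝ, 0 < t → y + t • b ∈ C)
    (hne : ∀ y, ∃ s : ℝ, y + s • b ∈ C) (hbdd : ∀ y, BddBelow {s : ℝ | y + s • b ∈ C})
    (y : E) (t : ℝ) : entryTime C b (y + t • b) = entryTime C b y - t := by
  refine eq_of_forall_gt_iff fun s => ?_
  rw [← add_smul_mem_iff_entryTime_lt hC hmono hne hbdd, add_assoc, ← add_smul,
    add_smul_mem_iff_entryTime_lt hC hmono hne hbdd, sub_lt_iff_lt_add']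

theorem continuous_entryTime (hC : IsOpen C)
    (hmono : ∀ y ∈ closure C, ∀ t : ℝ, 0 < t → y + t • b ∈ C)
    (hne : ∀ y, ∃ s : ℝ, y + s • b ∈ C) (hbdd : ∀ y, BddBelow {s : ℝ | y + s • b ∈ C}) :
    Continuous (entryTime C b) := by
  refine continuous_iff_lower_upperSemicontinuous.2 ⟨fun y s hs => ?_, fun y s hs => ?_⟩
  · obtain ⟨s', hss', hs'⟩ := exists_between hs
    have hnot : y + s' • b ∉ closure C := fun hcl => by
      have := hmono _ hcl _ (sub_pos.2 hs')
      rw [add_assoc, ← add_smul, add_sub_cancel] at this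
      exact lt_irrefl _ (entryTime_lt_of_add_smul_mem hC hbdd this)
    have hopen : IsOpen {y' : E | y' + s' • b ∉ closure C} :=
      isClosed_closure.isOpen_compl.preimage (by fun_prop)
    filter_upwards [hopen.mem_nhds hnot] with y' hy'
    exact hss'.trans_le <| not_lt.1 fun h =>
      hy' (subset_closure (add_smul_mem_of_entryTime_lt hmono hne h))
  · have hopen : IsOpen {y' : E | y' + s • b ∈ C} := hC.preimage (by fun_prop)
    filter_upwards [hopen.mem_nhds (add_smul_mem_of_entryTime_lt hmono hne hs)] with y' hy'
    exact entryTime_lt_of_add_smul_mem hC hbdd hy'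

theorem nonempty_homeomorph_of_add_smul_mem (hC : IsOpen C)
    (hmono : ∀ y ∈ closure C, ∀ t : ℝ, 0 < t → y + t • b ∈ C)
    (hne : ∀ y, ∃ s : ℝ, y + s • b ∈ C) (hbdd : ∀ y, BddBelow {s : ℝ | y + s • b ∈ C}) :
    Nonempty (C ≃ₜ E) := by
  have hC_eq : C = {y | entryTime C b y < 0} := by
    ext y
    simpa using add_smul_mem_iff_entryTime_lt hC hmono hne hbdd (y := y) (s := 0)
  obtain ⟨e⟩ := nonempty_homeomorph_of_map_add_smul (continuous_entryTime hC hmono hne hbdd)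
    (entryTime_add_smul hC hmono hne hbdd)
  exact ⟨(Homeomorph.setCongr hC_eq).trans e⟩

end Translation

theorem nonempty_homeomorph_ball_inter {E : Type*} [SeminormedAddCommGroup E] [NormedSpace ℝ E]
    {C : Set E} (hC : ∀ c : ℝ, 0 < c → ∀ y ∈ C, c • y ∈ C) :
    Nonempty (↥(Metric.ball (0 : E) 1 ∩ C) ≃ₜ C) := by
  let e := OpenPartialHomeomorph.univUnitBall (E := E)
  have he : ∀ y ∈ C, e y ∈ C := fun y hy => by
    rw [OpenPartialHomeomorph.univUnitBall_apply]
    exact hC _ (by positivity) y hy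
  have he_symm : ∀ y ∈ Metric.ball (0 : E) 1 ∩ C, e.symm y ∈ C := fun y ⟨hy1, hy⟩ => by
    rw [mem_ball_zero_iff] at hy1
    rw [OpenPartialHomeomorph.univUnitBall_symm_apply]
    exact hC _ (inv_pos.2 (Real.sqrt_pos.2 (by nlinarith [norm_nonneg y]))) y hy
  exact ⟨{
    toFun := fun p => ⟨e.symm p, he_symm p p.2⟩
    invFun := fun q => ⟨e q, e.map_source (Set.mem_univ _), he q q.2⟩
    left_inv := fun p => Subtype.ext (e.right_inv p.2.1)
    right_inv := fun q => Subtype.ext (e.left_inv (Set.mem_univ _))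
    continuous_toFun := (e.continuousOn_symm.comp_continuous continuous_subtype_val
      fun p => p.2.1).subtype_mk _
    continuous_invFun := (e.continuousOn.comp_continuous continuous_subtype_val
      fun _ => Set.mem_univ _).subtype_mk _ }⟩

section SplitCone

variable {n : ℕ}

theorem continuous_delta (n : ℕ) : Continuous (delta n) := by
  unfold delta
  split_ifs with h
  · exact ((Continuous.finset_sup'_apply h fun i _ => continuous_apply i).sub
      (Continuous.finset_inf'_apply h fun i _ => continuous_apply i)).div_const _
  · exact continuous_const

theorem continuous_nu (n : ℕ) (K : Finset (Fin n)) (i : Fin n) :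
    Continuous fun z => nu n z K i := by
  unfold nu
  split_ifs with h
  · refine Continuous.finset_inf'_apply h fun S _ => ?_
    unfold maxDist
    split_ifs with hS
    · exact Continuous.finset_sup'_apply hS fun j _ =>
        ((continuous_apply i).sub (continuous_apply j)).abs
    · exact continuous_const
  · exact continuous_const

theorem delta_nonneg (z : Fin n → ℝ) : 0 ≤ delta n z := by
  unfold delta
  split_ifs with h
  · obtain ⟨a, ha⟩ := h
    exact div_nonneg (sub_nonneg.2 ((inf'_le z ha).trans (le_sup' z ha))) n.cast_nonneg
  · exact le_rfl

theorem delta_smul {c : ℝ} (hc : 0 ≤ c) (z : Fin n → ℝ) : delta n (c • z) = c * delta n z := by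
  unfold delta
  split_ifs with h
  · rw [show c • z = (c * ·) ∘ z from rfl,
      ← apply_sup'_eq_sup'_comp h _ fun x y => mul_max_of_nonneg x y hc,
      ← apply_inf'_eq_inf'_comp h _ fun x y => mul_min_of_nonneg x y hc]
    ring
  · rw [mul_zero]

theorem maxDist_eq_mul_of_abs_sub_eq {z z' : Fin n → ℝ} {S : Finset (Fin n)} {i : Fin n} {c : ℝ}
    (hc : 0 ≤ c) (h : ∀ a ∈ S, |z' i - z' a| = c * |z i - z a|) :
    maxDist z' i S = c * maxDist z i S := by
  unfold maxDist
  split_ifs with hS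
  · rw [apply_sup'_eq_sup'_comp hS _ fun x y => mul_max_of_nonneg x y hc]
    exact sup'_congr hS rfl h
  · rw [mul_zero]

theorem nu_eq_mul_of_abs_sub_eq {z z' : Fin n → ℝ} {K : Finset (Fin n)} {i : Fin n} {c : ℝ}
    (hc : 0 ≤ c) (h : ∀ a ∈ K, |z' i - z' a| = c * |z i - z a|) :
    nu n z' K i = c * nu n z K i := by
  unfold nu
  split_ifs with hne
  · rw [apply_inf'_eq_inf'_comp hne _ fun x y => mul_min_of_nonneg x y hc]
    refine inf'_congr hne rfl fun S hS => maxDist_eq_mul_of_abs_sub_eq hc fun a ha => ?_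
    exact h a (mem_of_mem_erase ((mem_powersetCard.1 hS).1 ha))
  · rw [mul_zero]

theorem sup'_univ_eq_sup' {ι α : Type*} [Fintype ι] [DecidableEq ι] [SemilatticeSup α]
    {I J : Finset ι} (hU : I ∪ J = univ) (hJ : J.Nonempty) (h : univ.Nonempty) {f : ι → α}
    (hf : ∀ i ∈ I, ∀ j ∈ J, f i ≤ f j) : univ.sup' h f = J.sup' hJ f := by
  refine le_antisymm (sup'_le _ _ fun a _ => ?_) (sup'_mono f (subset_univ J) hJ)
  rcases mem_union.1 (hU ▸ mem_univ a : a ∈ I ∪ J) with ha | ha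
  · obtain ⟨j, hj⟩ := hJ
    exact (hf a ha j hj).trans (le_sup' f hj)
  · exact le_sup' f ha

theorem inf'_univ_eq_inf' {ι α : Type*} [Fintype ι] [DecidableEq ι] [SemilatticeInf α]
    {I J : Finset ι} (hU : I ∪ J = univ) (hI : I.Nonempty) (h : univ.Nonempty) {f : ι → α}
    (hf : ∀ i ∈ I, ∀ j ∈ J, f i ≤ f j) : univ.inf' h f = I.inf' hI f :=
  sup'_univ_eq_sup' (α := αᵒᵈ) (union_comm I J ▸ hU) hI h fun j hj i hi => hf i hi j hj

theorem delta_eq_of_le {I J : Finset (Fin n)} (hI : I.Nonempty) (hJ : J.Nonempty)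
    (hU : I ∪ J = univ) {z : Fin n → ℝ} (hz : ∀ i ∈ I, ∀ j ∈ J, z i ≤ z j) :
    delta n z = (J.sup' hJ z - I.inf' hI z) / n := by
  have h : (univ : Finset (Fin n)).Nonempty := hI.mono (subset_univ I)
  rw [delta, dif_pos h, sup'_univ_eq_sup' hU hJ h hz, inf'_univ_eq_inf' hU hI h hz]

def splitCone (n : ℕ) (I J : Finset (Fin n)) : Set (Fin n → ℝ) :=
  {z | ∀ i ∈ I, ∀ j ∈ J,
    delta n z < z j - z i ∧ nu n z I i < delta n z ∧ nu n z J j < delta n z}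

def weakSplitCone (n : ℕ) (I J : Finset (Fin n)) : Set (Fin n → ℝ) :=
  {z | ∀ i ∈ I, ∀ j ∈ J,
    delta n z ≤ z j - z i ∧ nu n z I i ≤ delta n z ∧ nu n z J j ≤ delta n z}

theorem isOpen_splitCone (I J : Finset (Fin n)) : IsOpen (splitCone n I J) := by
  simp only [splitCone, Set.ofPred_forall]
  refine isOpen_biInter_finset fun i _ => isOpen_biInter_finset fun j _ => ?_
  exact (isOpen_lt (continuous_delta n) (by fun_prop)).inter
    ((isOpen_lt (continuous_nu n I i) (continuous_delta n)).inter
      (isOpen_lt (continuous_nu n J j) (continuous_delta n)))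

theorem isClosed_weakSplitCone (I J : Finset (Fin n)) : IsClosed (weakSplitCone n I J) := by
  simp only [weakSplitCone, Set.ofPred_forall]
  refine isClosed_biInter fun i _ => isClosed_biInter fun j _ => ?_
  exact (isClosed_le (continuous_delta n) (by fun_prop)).inter
    ((isClosed_le (continuous_nu n I i) (continuous_delta n)).inter
      (isClosed_le (continuous_nu n J j) (continuous_delta n)))

theorem splitCone_subset_weakSplitCone (I J : Finset (Fin n)) :
    splitCone n I J ⊆ weakSplitCone n I J := fun _ hz i hi j hj =>
  let ⟨h₁, h₂, h₃⟩ := hz i hi j hj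
  ⟨h₁.le, h₂.le, h₃.le⟩

theorem zero_mem_weakSplitCone (I J : Finset (Fin n)) : 0 ∈ weakSplitCone n I J := by
  have hδ : delta n 0 = 0 := by simpa using delta_smul le_rfl (0 : Fin n → ℝ)
  have hν : ∀ K i, nu n 0 K i = 0 := fun K i => by
    simpa using nu_eq_mul_of_abs_sub_eq (z := 0) (K := K) (i := i) le_rfl (by simp)
  intro i _ j _
  simp [hδ, hν]

theorem smul_mem_splitCone {I J : Finset (Fin n)} {c : ℝ} (hc : 0 < c) {z : Fin n → ℝ}
    (hz : z ∈ splitCone n I J) : c • z ∈ splitCone n I J := by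
  have hν : ∀ K i, nu n (c • z) K i = c * nu n z K i := fun K i =>
    nu_eq_mul_of_abs_sub_eq hc.le fun a _ => by
      simp only [Pi.smul_apply, smul_eq_mul, ← mul_sub, abs_mul, abs_of_pos hc]
  intro i hi j hj
  obtain ⟨h₁, h₂, h₃⟩ := hz i hi j hj
  simp only [delta_smul hc.le, hν, Pi.smul_apply, smul_eq_mul, ← mul_sub]
  exact ⟨mul_lt_mul_of_pos_left h₁ hc, mul_lt_mul_of_pos_left h₂ hc,
    mul_lt_mul_of_pos_left h₃ hc⟩

theorem one_lt_of_memO {I J : Finset (Fin n)} (hIJ : memO n I J) : 1 < n := by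
  obtain ⟨⟨i, hi⟩, ⟨j, hj⟩, hdisj, -⟩ := hIJ
  exact Fintype.one_lt_card_iff.2 ⟨i, j, fun h => disjoint_left.1 hdisj hi (h ▸ hj)⟩ |>.trans_eq
    (Fintype.card_fin n)

-- `ν` does not change, while `δ` grows, but only by `1/n` of the gap `cJ - cI` (as `n ≥ 2`).
theorem add_mem_splitCone {I J : Finset (Fin n)} (hIJ : memO n I J) {z w : Fin n → ℝ}
    (hz : z ∈ weakSplitCone n I J) {cI cJ : ℝ} (hc : cI < cJ) (hwI : ∀ i ∈ I, w i = cI)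
    (hwJ : ∀ j ∈ J, w j = cJ) : z + w ∈ splitCone n I J := by
  have hn : (1 : ℝ) < n := by exact_mod_cast one_lt_of_memO hIJ
  obtain ⟨hI, hJ, -, hU, -⟩ := hIJ
  have hz_le : ∀ i ∈ I, ∀ j ∈ J, z i ≤ z j := fun i hi j hj => by
    linarith [(hz i hi j hj).1, delta_nonneg z]
  have hzw_le : ∀ i ∈ I, ∀ j ∈ J, (z + w) i ≤ (z + w) j := fun i hi j hj => by
    simp only [Pi.add_apply, hwI i hi, hwJ j hj]
    linarith [hz_le i hi j hj]
  have hδ : delta n (z + w) = delta n z + (cJ - cI) / n := by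
    have hsup : J.sup' hJ (z + w) = J.sup' hJ z + cJ := by
      rw [sup'_add]
      exact sup'_congr hJ rfl fun j hj => by simp [hwJ j hj]
    have hinf : I.inf' hI (z + w) = I.inf' hI z + cI := by
      rw [apply_inf'_eq_inf'_comp hI (· + cI) fun x y => (min_add_add_right x y cI).symm]
      exact inf'_congr hI rfl fun i hi => by simp [hwI i hi]
    rw [delta_eq_of_le hI hJ hU hzw_le, delta_eq_of_le hI hJ hU hz_le, hsup, hinf]
    ring
  have hgap : 0 < (cJ - cI) / n ∧ (cJ - cI) / n < cJ - cI :=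
    ⟨div_pos (sub_pos.2 hc) (by linarith), div_lt_self (sub_pos.2 hc) hn⟩
  have hν : ∀ K, ∀ c, ∀ i ∈ K, (∀ a ∈ K, w a = c) → nu n (z + w) K i = nu n z K i :=
    fun K c i hi hw => by
      simpa using nu_eq_mul_of_abs_sub_eq (c := 1) zero_le_one fun a ha => by
        simp [hw a ha, hw i hi]
  intro i hi j hj
  obtain ⟨h₁, h₂, h₃⟩ := hz i hi j hj
  rw [hδ, hν I cI i hi hwI, hν J cJ j hj hwJ, Pi.add_apply, Pi.add_apply, hwI i hi, hwJ j hj]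
  exact ⟨by linarith, by linarith, by linarith⟩

end SplitCone

section Hyperplane

variable {n : ℕ}

theorem continuous_ydot (n : ℕ) : Continuous (ydot n) := by
  refine continuous_pi fun i => ?_
  unfold ydot
  split_ifs
  · exact continuous_apply _
  · exact continuous_const

theorem ydot_add (y v : Fin (n - 1) → ℝ) : ydot n (y + v) = ydot n y + ydot n v := by
  funext i
  by_cases h : (i : ℕ) < n - 1 <;> simp [ydot, h]

theorem ydot_smul (c : ℝ) (y : Fin (n - 1) → ℝ) : ydot n (c • y) = c • ydot n y := by
  funext i
  by_cases h : (i : ℕ) < n - 1 <;> simp [ydot, h]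

theorem ydot_bpt {I J : Finset (Fin n)} (hIJ : memO n I J) :
    ∃ c : ℝ, ∀ a, ydot n (bpt n I J) a = if a ∈ I then c else c + 1 / 2 := by
  obtain ⟨⟨i₀, -⟩, -, hdisj, hU, -⟩ := hIJ
  have hn : 0 < n := Fin.pos i₀
  let l : Fin n := ⟨n - 1, by omega⟩
  have hl : l ∈ I ∨ l ∈ J := mem_union.1 (hU ▸ mem_univ l)
  refine ⟨if l ∈ J then -(1 / 2) else 0, fun a => ?_⟩
  by_cases ha : (a : ℕ) < n - 1
  · have hcast : Fin.castLE (Nat.sub_le n 1) ⟨a, ha⟩ = a := rfl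
    simp only [ydot, ha, dif_pos, bpt, hcast]
    split_ifs <;> norm_num
  · obtain rfl : a = l := Fin.ext (by simp [l]; omega)
    simp only [ydot, ha, dif_neg, not_false_eq_true]
    rcases hl with hl | hl
    · simp [hl, disjoint_left.1 hdisj hl]
    · simp [hl, disjoint_right.1 hdisj hl]

/-- `A_{I,J}` without the constraint `y ∈ Int(D^{n-1})`. -/
def coneAIJ (n : ℕ) (I J : Finset (Fin n)) : Set (Fin (n - 1) → ℝ) :=
  ydot n ⁻¹' splitCone n I J

theorem setAIJ_eq_ball_inter (I J : Finset (Fin n)) :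
    setAIJ n I J = Metric.ball 0 1 ∩ coneAIJ n I J := by
  have hD : IntD (n - 1) = Metric.ball 0 1 := by
    ext y
    simp [IntD, pi_norm_lt_iff, abs_lt]
  rw [← hD]
  rfl

theorem isOpen_coneAIJ (I J : Finset (Fin n)) : IsOpen (coneAIJ n I J) :=
  (isOpen_splitCone I J).preimage (continuous_ydot n)

theorem smul_mem_coneAIJ {I J : Finset (Fin n)} {c : ℝ} (hc : 0 < c) {y : Fin (n - 1) → ℝ}
    (hy : y ∈ coneAIJ n I J) : c • y ∈ coneAIJ n I J := by
  rw [coneAIJ, Set.mem_preimage, ydot_smul]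
  exact smul_mem_splitCone hc hy

theorem add_smul_bpt_mem_coneAIJ {I J : Finset (Fin n)} (hIJ : memO n I J)
    {y : Fin (n - 1) → ℝ} (hy : ydot n y ∈ weakSplitCone n I J) {t : ℝ} (ht : 0 < t) :
    y + t • bpt n I J ∈ coneAIJ n I J := by
  obtain ⟨c, hc⟩ := ydot_bpt hIJ
  rw [coneAIJ, Set.mem_preimage, ydot_add, ydot_smul]
  refine add_mem_splitCone hIJ hy (cI := t * c) (cJ := t * (c + 1 / 2)) (by linarith)
    (fun i hi => by simp [hc, hi]) (fun j hj => by simp [hc, disjoint_right.1 hIJ.2.2.1 hj])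

theorem bddBelow_add_smul_bpt_mem_coneAIJ {I J : Finset (Fin n)} (hIJ : memO n I J)
    (y : Fin (n - 1) → ℝ) : BddBelow {s : ℝ | y + s • bpt n I J ∈ coneAIJ n I J} := by
  obtain ⟨c, hc⟩ := ydot_bpt hIJ
  obtain ⟨⟨i, hi⟩, ⟨j, hj⟩, hdisj, -⟩ := hIJ
  refine ⟨2 * (ydot n y i - ydot n y j), fun s hs => ?_⟩
  have hgap := (lt_of_le_of_lt (delta_nonneg _) (hs i hi j hj).1)
  simp only [ydot_add, ydot_smul, Pi.add_apply, Pi.smul_apply, smul_eq_mul, hc, hi,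
    disjoint_right.1 hdisj hj, if_true, if_false] at hgap
  linarith

theorem nonempty_homeomorph_coneAIJ {I J : Finset (Fin n)} (hIJ : memO n I J) :
    Nonempty (coneAIJ n I J ≃ₜ (Fin (n - 1) → ℝ)) := by
  have hmono : ∀ y ∈ closure (coneAIJ n I J), ∀ t : ℝ, 0 < t → y + t • bpt n I J ∈ coneAIJ n I J :=
    fun y hy t ht => add_smul_bpt_mem_coneAIJ hIJ (closure_minimal
      (Set.preimage_mono (splitCone_subset_weakSplitCone I J))
      ((isClosed_weakSplitCone I J).preimage (continuous_ydot n)) hy) ht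
  have hb : bpt n I J ∈ coneAIJ n I J := by
    have h0 : ydot n 0 = 0 := by simpa using ydot_smul (n := n) 0 0
    simpa using add_smul_bpt_mem_coneAIJ hIJ (y := 0) (h0 ▸ zero_mem_weakSplitCone I J) one_pos
  exact nonempty_homeomorph_of_add_smul_mem (isOpen_coneAIJ I J) hmono
    (exists_add_smul_mem_of_smul_mem (isOpen_coneAIJ I J) hb fun _ hc _ hy =>
      smul_mem_coneAIJ hc hy)
    (bddBelow_add_smul_bpt_mem_coneAIJ hIJ)

end Hyperplane

theorem stmt_5_general (n : ℕ) (I J : Finset (Fin n)) (hIJ : memO n I J) :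
    Nonempty ((setAIJ n I J) ≃ₜ (Fin (n - 1) → ℝ)) := by
  obtain ⟨e₁⟩ := nonempty_homeomorph_ball_inter fun _ hc _ hy =>
    smul_mem_coneAIJ (I := I) (J := J) hc hy
  obtain ⟨e₂⟩ := nonempty_homeomorph_coneAIJ hIJ
  exact ⟨(Homeomorph.setCongr (setAIJ_eq_ball_inter I J)).trans (e₁.trans e₂)⟩

/-- For each `(I,J) ∈ O`, the subspace `A_{I,J}` of `ℝ^{n-1}` is homeomorphic to `ℝ^{n-1}`. -/
theorem stmt_5 (n : ℕ) (hn : 2 ≤ n) (I J : Finset (Fin n)) (hIJ : memO n I J) :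
    Nonempty ((setAIJ n I J) ≃ₜ (Fin (n - 1) → ℝ)) :=
  stmt_5_general n I J hIJ
end

section
/- Let n ≥ 2 and z = (t₁,…,tₙ) ∈ ℝⁿ with ν^z_{[n]} < δ^z. Suppose (I,J) is a pair of disjoint nonempty subsets of [n] with I ∪ J = [n] such that t_j − t_i > δ^z for every i ∈ I and j ∈ J. Then |I| > n/3, |J| > n/3, ν^z_{I,i} < δ^z for every i ∈ I, and ν^z_{J,j} < δ^z for every j ∈ J. -/
open Finset

lemma key_13 (n : ℕ) (z : Fin n → ℝ)
    (hz : nuMax n z Finset.univ < delta n z)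
    (K J : Finset (Fin n)) (hunion : K ∪ J = Finset.univ)
    (i : Fin n) (hi : i ∈ K)
    (hfar : ∀ x ∈ J, delta n z < |z i - z x|) :
    nu n z K i < delta n z ∧ n / 3 + 1 ≤ K.card := by
  have huniv : (Finset.univ : Finset (Fin n)).Nonempty := ⟨i, mem_univ i⟩
  have hcard : n / 3 ≤ ((univ : Finset (Fin n)).erase i).card := by
    rw [card_erase_of_mem (mem_univ i), card_univ, Fintype.card_fin]; omega
  have hne : (((univ : Finset (Fin n)).erase i).powersetCard (n / 3)).Nonempty :=
    Finset.powersetCard_nonempty.2 hcard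
  have h1 : nu n z Finset.univ i < delta n z := by
    have h0 : nu n z Finset.univ i ≤ nuMax n z Finset.univ := by
      rw [nuMax, dif_pos huniv]; exact Finset.le_sup' (nu n z Finset.univ) (mem_univ i)
    linarith
  rw [nu, dif_pos hne] at h1
  obtain ⟨S, hS, hSeq⟩ := Finset.exists_mem_eq_inf' hne (maxDist z i)
  rw [hSeq] at h1
  rw [Finset.mem_powersetCard] at hS
  obtain ⟨hSsub, hScard⟩ := hS
  have hSK : S ⊆ K.erase i := by
    intro x hx
    have hxe := hSsub hx
    rw [mem_erase] at hxe ⊢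
    refine ⟨hxe.1, ?_⟩
    by_contra hxK
    have hxJ : x ∈ J := by
      have hu := mem_univ x
      rw [← hunion, mem_union] at hu; tauto
    have h2 := hfar x hxJ
    have h3 : |z i - z x| ≤ maxDist z i S := by
      rw [maxDist, dif_pos ⟨x, hx⟩]
      exact Finset.le_sup' (fun j => |z i - z j|) hx
    linarith
  have hSm : S ∈ (K.erase i).powersetCard (n / 3) :=
    Finset.mem_powersetCard.2 ⟨hSK, hScard⟩
  constructor
  · rw [nu, dif_pos ⟨S, hSm⟩]
    exact lt_of_le_of_lt (Finset.inf'_le _ hSm) h1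
  · have h4 : n / 3 ≤ (K.erase i).card := hScard ▸ card_le_card hSK
    rw [card_erase_of_mem hi] at h4
    have h5 : 1 ≤ K.card := card_pos.2 ⟨i, hi⟩
    omega

/-- If `ν^z_{[n]} < δ^z` and `(I, J)` is a pair of disjoint nonempty subsets of `[n]` with
`I ∪ J = [n]` and `t_j - t_i > δ^z` for all `i ∈ I`, `j ∈ J`, then `|I| > n/3`, `|J| > n/3`,
`ν^z_{I,i} < δ^z` for all `i ∈ I`, and `ν^z_{J,j} < δ^z` for all `j ∈ J`. -/
theorem stmt_13 (n : ℕ) (hn : 2 ≤ n) (z : Fin n → ℝ)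
    (hz : nuMax n z Finset.univ < delta n z)
    (I J : Finset (Fin n)) (hI : I.Nonempty) (hJ : J.Nonempty) (hdisj : Disjoint I J)
    (hunion : I ∪ J = Finset.univ)
    (hsep : ∀ i ∈ I, ∀ j ∈ J, delta n z < z j - z i) :
    (n : ℝ) < 3 * I.card ∧ (n : ℝ) < 3 * J.card ∧
    (∀ i ∈ I, nu n z I i < delta n z) ∧ (∀ j ∈ J, nu n z J j < delta n z) := by
  
  have keyI : ∀ i ∈ I, nu n z I i < delta n z ∧ n / 3 + 1 ≤ I.card := by
    intro i hi
    refine key_13 n z hz I J hunion i hi (fun x hx => ?_)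
    have := hsep i hi x hx
    have : z x - z i ≤ |z i - z x| := by rw [abs_sub_comm]; exact le_abs_self _
    linarith [hsep i hi x hx]
  have keyJ : ∀ j ∈ J, nu n z J j < delta n z ∧ n / 3 + 1 ≤ J.card := by
    intro j hj
    refine key_13 n z hz J I (by rw [union_comm]; exact hunion) j hj (fun x hx => ?_)
    have : z j - z x ≤ |z j - z x| := le_abs_self _
    linarith [hsep x hx j hj]
  obtain ⟨i0, hi0⟩ := hI
  obtain ⟨j0, hj0⟩ := hJ
  have hIc : n < 3 * I.card := by have := (keyI i0 hi0).2; omega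
  have hJc : n < 3 * J.card := by have := (keyJ j0 hj0).2; omega
  exact ⟨by exact_mod_cast hIc, by exact_mod_cast hJc,
    fun i hi => (keyI i hi).1, fun j hj => (keyJ j hj).1⟩
end
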